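/- arXiv:1412.6651 — 3 statements merged into one kernel-verified Lean document; each statement's English description precedes it below -/
import Mathlib

section
/- Let a = ηh + (p+1)α and c² = ηhpα, and let φ = 1 - (a + √(a²-4c²))/2 be the smaller root of λ² - (2-a)λ + (1-a+c²) = 0. Then φ > -1 if and only if (2-ηh)(2-pα) > 2α and (2-ηh) + (2-pα) > α. -/
/-! The smaller root `(-b - √(b² - 4c))/2` of `x² + b x + c` exceeds `t` exactly when `t` lies
left of the vertex and the quadratic is positive at `t`. For `φ` and `t = -1` these two conditions
are `4 - a > 0` and `4 - 2a + c² > 0`, which factor as the two stated inequalities since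
`c² = (ηh)(pα)`. -/

theorem lt_neg_sub_sqrt_div_two_iff (b c t : ℝ) :
    t < (-b - √(b ^ 2 - 4 * c)) / 2 ↔ 2 * t + b < 0 ∧ 0 < t ^ 2 + b * t + c := by
  have hsqrt : t < (-b - √(b ^ 2 - 4 * c)) / 2 ↔ √(b ^ 2 - 4 * c) < -b - 2 * t := by
    constructor <;> intro h <;> linarith
  rw [hsqrt]
  constructor
  · intro h
    have hpos : 0 < -b - 2 * t := (Real.sqrt_nonneg _).trans_lt h
    have hsq := (Real.sqrt_lt' hpos).mp h
    exact ⟨by linarith, by nlinarith⟩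
  · rintro ⟨hvertex, hval⟩
    have hpos : 0 < -b - 2 * t := by linarith
    exact (Real.sqrt_lt' hpos).mpr (by nlinarith)

theorem easgd_phi_gt_neg_one_iff_general (η h α : ℝ) (p : ℕ)
    (a c2 φ : ℝ)
    (ha : a = η * h + (p + 1) * α)
    (hc2 : c2 = η * h * p * α)
    (hφ : φ = 1 - (a + Real.sqrt (a ^ 2 - 4 * c2)) / 2) :
    φ > -1 ↔ ((2 - η * h) * (2 - p * α) > 2 * α ∧ (2 - η * h) + (2 - p * α) > α) := by
  have hdisc : (a - 2) ^ 2 - 4 * (1 - a + c2) = a ^ 2 - 4 * c2 := by ring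
  have hroot : φ = (-(a - 2) - √((a - 2) ^ 2 - 4 * (1 - a + c2))) / 2 := by
    rw [hφ, hdisc]; ring
  rw [hroot, gt_iff_lt, lt_neg_sub_sqrt_div_two_iff]
  subst ha hc2
  constructor <;> rintro ⟨h₁, h₂⟩ <;> constructor <;> linarith

/-- φ > -1 iff (2-ηh)(2-pα) > 2α and (2-ηh) + (2-pα) > α, where φ is the smaller root
of λ² - (2-a)λ + (1-a+c²) = 0 with a = ηh + (p+1)α, c² = ηhpα. -/
theorem easgd_phi_gt_neg_one_iff (η h α : ℝ) (p : ℕ)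
    (a c2 φ : ℝ)
    (ha : a = η * h + (p + 1) * α)
    (hc2 : c2 = η * h * p * α)
    (hdisc : 0 ≤ a ^ 2 - 4 * c2)
    (hφ : φ = 1 - (a + Real.sqrt (a ^ 2 - 4 * c2)) / 2) :
    φ > -1 ↔ ((2 - η * h) * (2 - p * α) > 2 * α ∧ (2 - η * h) + (2 - p * α) > α) :=
  easgd_phi_gt_neg_one_iff_general η h α p a c2 φ ha hc2 hφ
end

section
/- Consider the 2×2 real symmetric matrix M = [[1-η-α, α], [α, 1-α]]. Both (real) eigenvalues λ of M satisfy |λ| ≤ 1 if and only if 0 ≤ η ≤ 2 and 0 ≤ α ≤ (4-2η)/(4-η). -/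
/-!
The eigenvalues of a real symmetric 2×2 matrix with trace `t` and determinant `D` are the two
real roots `r₁, r₂` of `p(x) = x² - t x + D`. Both lie in `[-1, 1]` iff
`p(1) = (1 - r₁)(1 - r₂) ≥ 0`, `p(-1) = (1 + r₁)(1 + r₂) ≥ 0` and `|r₁ + r₂| ≤ 2`
(the Schur–Cohn conditions). For `M` these read `ηα ≥ 0`, `(4 - 2η) - α(4 - η) ≥ 0` and
`0 ≤ η + 2α ≤ 4`, which cut out exactly the stated region.
-/

open Matrix

theorem Matrix.exists_mulVec_eq_smul_iff_det_sub_smul_one_eq_zero {n R : Type*} [Fintype n]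
    [DecidableEq n] [CommRing R] [IsDomain R] (A : Matrix n n R) (μ : R) :
    (∃ v ≠ 0, A *ᵥ v = μ • v) ↔ (A - μ • 1).det = 0 := by
  rw [← exists_mulVec_eq_zero_iff]
  simp only [sub_mulVec, smul_mulVec, one_mulVec, sub_eq_zero]

theorem Matrix.det_fin_two_of_sub_smul_one {R : Type*} [CommRing R] (a b c d μ : R) :
    (!![a, b; c, d] - μ • 1).det = μ ^ 2 - (a + d) * μ + (a * d - b * c) := by
  simp only [det_fin_two, Matrix.sub_apply, Matrix.smul_apply, one_fin_two, of_apply, cons_val',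
    cons_val_zero, cons_val_one, cons_val_fin_one, smul_eq_mul]
  ring

theorem abs_le_one_and_abs_le_one_iff (r₁ r₂ : ℝ) :
    |r₁| ≤ 1 ∧ |r₂| ≤ 1 ↔
      0 ≤ (1 - r₁) * (1 - r₂) ∧ 0 ≤ (1 + r₁) * (1 + r₂) ∧ |r₁ + r₂| ≤ 2 := by
  simp only [abs_le]
  constructor
  · rintro ⟨⟨h₁, h₁'⟩, h₂, h₂'⟩
    refine ⟨by nlinarith, by nlinarith, by linarith, by linarith⟩
  · rintro ⟨hm, hp, hs, hs'⟩
    refine ⟨⟨?_, ?_⟩, ?_, ?_⟩ <;> nlinarith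

theorem exists_add_eq_and_mul_eq_of_four_mul_le_sq {t D : ℝ} (h : 4 * D ≤ t ^ 2) :
    ∃ r₁ r₂ : ℝ, r₁ + r₂ = t ∧ r₁ * r₂ = D := by
  have hs := Real.sq_sqrt (sub_nonneg.2 h)
  exact ⟨(t + √(t ^ 2 - 4 * D)) / 2, (t - √(t ^ 2 - 4 * D)) / 2, by ring,
    by linear_combination -hs / 4⟩

theorem forall_quadratic_root_abs_le_one_iff {t D : ℝ} (h : 4 * D ≤ t ^ 2) :
    (∀ x : ℝ, x ^ 2 - t * x + D = 0 → |x| ≤ 1) ↔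
      0 ≤ 1 - t + D ∧ 0 ≤ 1 + t + D ∧ |t| ≤ 2 := by
  obtain ⟨r₁, r₂, rfl, rfl⟩ := exists_add_eq_and_mul_eq_of_four_mul_le_sq h
  have hfac (x : ℝ) : x ^ 2 - (r₁ + r₂) * x + r₁ * r₂ = (x - r₁) * (x - r₂) := by ring
  have hroots : (∀ x : ℝ, (x - r₁) * (x - r₂) = 0 → |x| ≤ 1) ↔ |r₁| ≤ 1 ∧ |r₂| ≤ 1 := by
    simp only [mul_eq_zero, sub_eq_zero, forall_eq_or_imp, forall_eq]
  simp only [hfac, hroots, abs_le_one_and_abs_le_one_iff]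
  constructor <;> rintro ⟨h₁, h₂, h₃⟩ <;> exact ⟨by linarith, by linarith, h₃⟩

theorem forall_eigenvalue_abs_le_one_iff_fin_two_symm (a b d : ℝ) :
    (∀ μ : ℝ, (∃ v ≠ 0, !![a, b; b, d] *ᵥ v = μ • v) → |μ| ≤ 1) ↔
      0 ≤ 1 - (a + d) + (a * d - b * b) ∧ 0 ≤ 1 + (a + d) + (a * d - b * b) ∧ |a + d| ≤ 2 := by
  simp only [exists_mulVec_eq_smul_iff_det_sub_smul_one_eq_zero, det_fin_two_of_sub_smul_one]
  exact forall_quadratic_root_abs_le_one_iff (by nlinarith [sq_nonneg (a - d), sq_nonneg b])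

theorem easgd_stability_region_iff (η α : ℝ) :
    0 ≤ η * α ∧ 0 ≤ 4 - 2 * η - α * (4 - η) ∧ |2 - η - 2 * α| ≤ 2 ↔
      0 ≤ η ∧ η ≤ 2 ∧ 0 ≤ α ∧ α ≤ (4 - 2 * η) / (4 - η) := by
  rw [abs_le]
  constructor
  · rintro ⟨hprod, hm, hs, hs'⟩
    have hη : 0 ≤ η := by
      by_contra! hη
      nlinarith
    have hα : 0 ≤ α := by
      by_contra! hα
      nlinarith
    have hη4 : η < 4 := by
      by_contra! hη4
      nlinarith
    refine ⟨hη, by nlinarith, hα, ?_⟩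
    rw [le_div_iff₀ (by linarith)]
    linarith
  · rintro ⟨hη, hη2, hα, hαle⟩
    rw [le_div_iff₀ (by linarith)] at hαle
    refine ⟨by positivity, by linarith, ?_, by linarith⟩
    nlinarith [sq_nonneg (η - 2)]

theorem easgd_two_by_two_stability_general (η α : ℝ) :
    (∀ lam : ℝ,
        (∃ v : Fin 2 → ℝ, v ≠ 0 ∧
          (Matrix.of !![1 - η - α, α; α, 1 - α]).mulVec v = lam • v) →
        |lam| ≤ 1)
    ↔ (0 ≤ η ∧ η ≤ 2 ∧ 0 ≤ α ∧ α ≤ (4 - 2 * η) / (4 - η)) := by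
  refine (forall_eigenvalue_abs_le_one_iff_fin_two_symm _ _ _).trans ?_
  convert easgd_stability_region_iff η α using 5 <;> ring

/-- Stability of the 2×2 symmetric EASGD map: both real eigenvalues λ of
M = [[1-η-α, α], [α, 1-α]] satisfy |λ| ≤ 1 iff 0 ≤ η ≤ 2 and 0 ≤ α ≤ (4-2η)/(4-η). -/
theorem easgd_two_by_two_stability (η α : ℝ) (hη4 : η < 4) :
    (∀ lam : ℝ,
        (∃ v : Fin 2 → ℝ, v ≠ 0 ∧
          (Matrix.of !![1 - η - α, α; α, 1 - α]).mulVec v = lam • v) →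
        |lam| ≤ 1)
    ↔ (0 ≤ η ∧ η ≤ 2 ∧ 0 ≤ α ∧ α ≤ (4 - 2 * η) / (4 - η)) :=
  easgd_two_by_two_stability_general η α
end

section
/- Let M be the 3×3 matrix F¹ = [[1-η-α, 0, α], [0, 1, 0], [α, 0, 1-α]]. If 0 ≤ η ≤ 2 and 0 ≤ α ≤ (4-2η)/(4-η) with η < 4, then every eigenvalue λ of M satisfies |λ| ≤ 1. -/
/-!
Every eigenvalue of `F¹` is either `1` (eigenvectors along the inactive worker `x²`) or a root
of the characteristic polynomial `λ² - (2 - η - 2α) λ + (1 - η - α)(1 - α) - α²` of the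
active block. A real root of a monic quadratic `p` lies in `[-1, 1]` as soon as `p(1) ≥ 0`,
`p(-1) ≥ 0` and its vertex lies in `[-1, 1]`. Here `p(1) = ηα`, `p(-1) = (4 - 2η) - α(4 - η)`,
which is nonnegative exactly under the bound on `α`, and the vertex is `1 - α - η/2`.
-/

open Matrix

theorem Matrix.det_smul_one_sub_eq_zero_of_mulVec_eq_smul {n R : Type*} [Fintype n]
    [DecidableEq n] [CommRing R] [IsDomain R] {M : Matrix n n R} {lam : R} {v : n → R}
    (hv : v ≠ 0) (hMv : M *ᵥ v = lam • v) : (lam • (1 : Matrix n n R) - M).det = 0 :=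
  exists_mulVec_eq_zero_iff.1
    ⟨v, hv, by rw [sub_mulVec, smul_mulVec, one_mulVec, hMv, sub_self]⟩

theorem abs_le_one_of_sq_sub_mul_add_eq_zero {b c x : ℝ} (hb : |b| ≤ 2)
    (hp_one : 0 ≤ 1 - b + c) (hp_neg_one : 0 ≤ 1 + b + c) (hx : x ^ 2 - b * x + c = 0) :
    |x| ≤ 1 := by
  obtain ⟨hb_lower, hb_upper⟩ := abs_le.1 hb
  refine abs_le.2 ⟨?_, ?_⟩
  · by_contra! hx_lt
    have : 0 < (x + 1) * (x - 1 + b) := mul_pos_of_neg_of_neg (by linarith) (by linarith)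
    nlinarith
  · by_contra! hx_gt
    have : 0 < (x - 1) * (x + 1 - b) := mul_pos (by linarith) (by linarith)
    nlinarith

def easgdRoundRobinMap {R : Type*} [Ring R] (η α : R) : Matrix (Fin 3) (Fin 3) R :=
  !![1 - η - α, 0, α; 0, 1, 0; α, 0, 1 - α]

theorem det_smul_one_sub_easgdRoundRobinMap {R : Type*} [CommRing R] (η α lam : R) :
    (lam • (1 : Matrix (Fin 3) (Fin 3) R) - easgdRoundRobinMap η α).det =
      (lam - 1) * (lam ^ 2 - (2 - η - 2 * α) * lam + ((1 - η - α) * (1 - α) - α ^ 2)) := by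
  simp [easgdRoundRobinMap, det_fin_three]
  ring

theorem easgd_round_robin_map_stability_general (η α : ℝ)
    (hη0 : 0 ≤ η) (hα0 : 0 ≤ α)
    (hα : α ≤ (4 - 2 * η) / (4 - η)) (hη4 : η < 4) :
    ∀ lam : ℝ,
      (∃ v : Fin 3 → ℝ, v ≠ 0 ∧
        (Matrix.of !![1 - η - α, 0, α; 0, 1, 0; α, 0, 1 - α]).mulVec v = lam • v) →
      |lam| ≤ 1 := by
  rintro lam ⟨v, hv, hMv⟩
  have hdet := det_smul_one_sub_eq_zero_of_mulVec_eq_smul (M := easgdRoundRobinMap η α) hv hMv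
  rw [det_smul_one_sub_easgdRoundRobinMap] at hdet
  rcases mul_eq_zero.1 hdet with h_one | h_block
  · rw [sub_eq_zero.1 h_one, abs_one]
  have hα' : α * (4 - η) ≤ 4 - 2 * η := (le_div_iff₀ (by linarith)).1 hα
  refine abs_le_one_of_sq_sub_mul_add_eq_zero ?_ ?_ ?_ h_block
  · refine abs_le.2 ⟨?_, by linarith⟩
    -- `(η + 2α)(4 - η) ≤ 8 - η² ≤ 4(4 - η)`
    nlinarith [sq_nonneg (η - 2)]
  · nlinarith [mul_nonneg hη0 hα0]
  · linarith

/-- Stability of the 3×3 EASGD round-robin map F¹ for p = 2: under the stability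
condition, every real eigenvalue λ of F¹ satisfies |λ| ≤ 1. -/
theorem easgd_round_robin_map_stability (η α : ℝ)
    (hη0 : 0 ≤ η) (hη2 : η ≤ 2) (hα0 : 0 ≤ α)
    (hα : α ≤ (4 - 2 * η) / (4 - η)) (hη4 : η < 4) :
    ∀ lam : ℝ,
      (∃ v : Fin 3 → ℝ, v ≠ 0 ∧
        (Matrix.of !![1 - η - α, 0, α; 0, 1, 0; α, 0, 1 - α]).mulVec v = lam • v) →
      |lam| ≤ 1 :=
  easgd_round_robin_map_stability_general η α hη0 hα0 hα hη4
end
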